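/- Let $1 \le t \le k$, let $x \in \mathbb{F}_2^n$ have weight $2t$, and for each partition $\alpha = (x_1, x_2)$ of the support of $x$ into two sets of size $t$, and each unit vector $y = (y_a)_{a \in S(n,k)}$ (i.e., $\sum_a y_a^2 = 1$), set $s_\alpha(y) = \sum_{w} y_{x_1 \cup w}\, y_{x_2 \cup w}$, the sum over all $(k-t)$-subsets $w$ of the complement of the support of $x$. Then $\sum_{x \in S(n,2t)} \sum_{\alpha \in P(x)} s_\alpha(y)^2 \le \binom{k}{t}^2$. -/

import Mathlib

/-!
Apply Cauchy–Schwarz to each `s_α(y)`: the left side is at most the sum of `y_a² y_b²` over all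
terms `(x, (x₁, x₂), w₁, w₂)` with `a = x₁ + w₁`, `b = x₂ + w₂`, both of weight `k`. Such a term
is recovered from `(a, b)` and the supports of `x₁ ⊆ a`, `x₂ ⊆ b`, so each pair `(a, b)` occurs at
most `C(k, t)²` times, and `∑_{a,b} y_a² y_b² = (∑_a y_a²)² = 1`.
-/

open Finset

/-- The Hamming sphere of radius `k` in `𝔽₂ⁿ`. -/
def sphere (n k : ℕ) : Finset (Fin n → ZMod 2) :=
  Finset.univ.filter (fun x => hammingNorm x = k)

/-- The set `P(x)` of ordered partitions of (the support of) `x` into two weight-`t` parts: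
pairs `(x₁, x₂)` with `x₁ + x₂ = x` and each of weight `t`. -/
def parts (n t : ℕ) (x : Fin n → ZMod 2) :
    Finset ((Fin n → ZMod 2) × (Fin n → ZMod 2)) :=
  (Finset.univ ×ˢ Finset.univ).filter
    (fun p => p.1 + p.2 = x ∧ hammingNorm p.1 = t ∧ hammingNorm p.2 = t)

/-- The `(k-t)`-subsets `w` of the complement of the support of `x`. -/
def outside (n k t : ℕ) (x : Fin n → ZMod 2) : Finset (Fin n → ZMod 2) :=
  Finset.univ.filter (fun w => hammingNorm w = k - t ∧ ∀ i, x i = 0 ∨ w i = 0)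

theorem Finset.sum_comp_le_mul_sum {ι β : Type*} [DecidableEq β] {s : Finset ι} {B : Finset β}
    {f : ι → β} {g : β → ℝ} {C : ℕ} (hg : ∀ b ∈ B, 0 ≤ g b) (hf : ∀ i ∈ s, f i ∈ B)
    (hC : ∀ b ∈ B, #{i ∈ s | f i = b} ≤ C) :
    ∑ i ∈ s, g (f i) ≤ C * ∑ b ∈ B, g b := by
  rw [← sum_fiberwise_of_maps_to hf, mul_sum]
  refine sum_le_sum fun b hb => ?_
  rw [sum_congr rfl fun i hi => by rw [(mem_filter.mp hi).2], sum_const, nsmul_eq_mul]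
  exact mul_le_mul_of_nonneg_right (by exact_mod_cast hC b hb) (hg b hb)

namespace F2Vector

theorem add_add_cancel_left {ι : Type*} (u v : ι → ZMod 2) : u + (u + v) = v := by
  funext i
  simp only [Pi.add_apply]
  generalize u i = a
  generalize v i = b
  revert a b
  decide

variable {ι : Type*} [Fintype ι]

def supp (u : ι → ZMod 2) : Finset ι := univ.filter (u · ≠ 0)

theorem card_supp (u : ι → ZMod 2) : #(supp u) = hammingNorm u := rfl

theorem supp_injective : Function.Injective (supp : (ι → ZMod 2) → Finset ι) := by
  intro u v h
  funext i
  have hi : u i ≠ 0 ↔ v i ≠ 0 := by simpa [supp] using congrArg (i ∈ ·) h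
  revert hi
  generalize u i = a
  generalize v i = b
  revert a b
  decide

variable [DecidableEq ι] {u v : ι → ZMod 2}

theorem supp_add_of_disjoint (h : ∀ i, u i = 0 ∨ v i = 0) :
    supp (u + v) = supp u ∪ supp v := by
  ext i
  rcases h i with h | h <;> simp [supp, h]

theorem hammingNorm_add_of_disjoint (h : ∀ i, u i = 0 ∨ v i = 0) :
    hammingNorm (u + v) = hammingNorm u + hammingNorm v := by
  rw [← card_supp, supp_add_of_disjoint h, card_union_of_disjoint]
  · rfl
  · exact disjoint_left.mpr fun i hu hv => by rcases h i with h | h <;> simp_all [supp]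

/-- Over `𝔽₂` a common coordinate of the supports cancels in `u + v`. -/
theorem disjoint_of_hammingNorm_add (h : hammingNorm (u + v) = hammingNorm u + hammingNorm v)
    (i : ι) : u i = 0 ∨ v i = 0 := by
  by_contra! hi
  have hsub : supp (u + v) ⊆ (supp u ∪ supp v).erase i := by
    intro j hj
    have hj' : u j + v j ≠ 0 := by simpa [supp] using hj
    refine mem_erase.mpr ⟨?_, ?_⟩
    · rintro rfl
      revert hj' hi
      generalize u j = a
      generalize v j = b
      revert a b
      decide
    · by_contra hj''
      simp_all [supp]
  have hi_mem : i ∈ supp u ∪ supp v := mem_union_left _ (by simpa [supp] using hi.1)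
  have h₁ := card_le_card hsub
  have h₂ := card_union_le (supp u) (supp v)
  have h₃ : 0 < #(supp u ∪ supp v) := card_pos.mpr ⟨i, hi_mem⟩
  rw [card_erase_of_mem hi_mem] at h₁
  simp only [card_supp] at h₁ h₂
  omega

theorem supp_subset_supp_add_of_disjoint (h : ∀ i, u i = 0 ∨ v i = 0) :
    supp u ⊆ supp (u + v) :=
  supp_add_of_disjoint h ▸ subset_union_left

end F2Vector

open F2Vector

section

variable {n k t : ℕ} {x w : Fin n → ZMod 2} {p : (Fin n → ZMod 2) × (Fin n → ZMod 2)}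

theorem mem_sphere : x ∈ sphere n k ↔ hammingNorm x = k := by
  simp [sphere]

theorem mem_parts :
    p ∈ parts n t x ↔ p.1 + p.2 = x ∧ hammingNorm p.1 = t ∧ hammingNorm p.2 = t := by
  simp [parts]

theorem mem_outside :
    w ∈ outside n k t x ↔ hammingNorm w = k - t ∧ ∀ i, x i = 0 ∨ w i = 0 := by
  simp [outside]

theorem swap_mem_parts (hp : p ∈ parts n t x) : p.swap ∈ parts n t x := by
  obtain ⟨hsum, h₁, h₂⟩ := mem_parts.mp hp
  exact mem_parts.mpr ⟨by rw [Prod.fst_swap, Prod.snd_swap, add_comm, hsum], h₂, h₁⟩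

theorem disjoint_of_mem_parts (hx : x ∈ sphere n (2 * t)) (hp : p ∈ parts n t x) (i : Fin n) :
    p.1 i = 0 ∨ p.2 i = 0 := by
  obtain ⟨hsum, h₁, h₂⟩ := mem_parts.mp hp
  refine disjoint_of_hammingNorm_add ?_ i
  rw [hsum, mem_sphere.mp hx, h₁, h₂, two_mul]

theorem disjoint_fst_of_mem_outside (hx : x ∈ sphere n (2 * t)) (hp : p ∈ parts n t x)
    (hw : w ∈ outside n k t x) (i : Fin n) : p.1 i = 0 ∨ w i = 0 := by
  have hsum : p.1 i + p.2 i = x i := congrFun (mem_parts.mp hp).1 i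
  rcases disjoint_of_mem_parts hx hp i with h | h
  · exact Or.inl h
  · rcases (mem_outside.mp hw).2 i with hxi | hwi
    · rw [h, add_zero] at hsum
      exact Or.inl (hsum.trans hxi)
    · exact Or.inr hwi

theorem fst_add_mem_sphere (htk : t ≤ k) (hx : x ∈ sphere n (2 * t)) (hp : p ∈ parts n t x)
    (hw : w ∈ outside n k t x) : p.1 + w ∈ sphere n k := by
  rw [mem_sphere, hammingNorm_add_of_disjoint (disjoint_fst_of_mem_outside hx hp hw),
    (mem_parts.mp hp).2.1, (mem_outside.mp hw).1]
  omega

end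

/-- The terms `⟨x, (x₁, x₂), w₁, w₂⟩` of `∑ₓ ∑_α (∑_w y_{x₁ ∪ w}²) (∑_w y_{x₂ ∪ w}²)`. -/
def configs (n k t : ℕ) :
    Finset (Σ _ : Fin n → ZMod 2, ((Fin n → ZMod 2) × (Fin n → ZMod 2)) ×
      (Fin n → ZMod 2) × (Fin n → ZMod 2)) :=
  (sphere n (2 * t)).sigma fun x => parts n t x ×ˢ (outside n k t x ×ˢ outside n k t x)

def endpoints {n : ℕ} (q : Σ _ : Fin n → ZMod 2, ((Fin n → ZMod 2) × (Fin n → ZMod 2)) ×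
      (Fin n → ZMod 2) × (Fin n → ZMod 2)) : (Fin n → ZMod 2) × (Fin n → ZMod 2) :=
  (q.2.1.1 + q.2.2.1, q.2.1.2 + q.2.2.2)

variable {n k t : ℕ}

theorem endpoints_mem (htk : t ≤ k) {q} (hq : q ∈ configs n k t) :
    endpoints q ∈ sphere n k ×ˢ sphere n k := by
  obtain ⟨x, p, w₁, w₂⟩ := q
  simp only [configs, mem_sigma, mem_product] at hq
  obtain ⟨hx, hp, hw₁, hw₂⟩ := hq
  exact mem_product.mpr
    ⟨fst_add_mem_sphere htk hx hp hw₁, fst_add_mem_sphere htk hx (swap_mem_parts hp) hw₂⟩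

/-- A term is determined by its endpoints `(a, b)` together with the supports of `x₁ ⊆ a` and
`x₂ ⊆ b`, which are `t`-subsets of `k`-sets. -/
theorem card_filter_endpoints_le {a b : Fin n → ZMod 2} (ha : a ∈ sphere n k)
    (hb : b ∈ sphere n k) : #{q ∈ configs n k t | endpoints q = (a, b)} ≤ k.choose t ^ 2 := by
  have hcard : #((supp a).powersetCard t ×ˢ (supp b).powersetCard t) = k.choose t ^ 2 := by
    rw [card_product, card_powersetCard, card_powersetCard, card_supp, card_supp,
      mem_sphere.mp ha, mem_sphere.mp hb, sq]
  rw [← hcard]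
  refine card_le_card_of_injOn (fun q => (supp q.2.1.1, supp q.2.1.2)) ?_ ?_
  · rintro ⟨x, p, w₁, w₂⟩ hq
    simp only [coe_filter, configs, mem_sigma, mem_product, endpoints, Prod.mk.injEq] at hq
    obtain ⟨⟨hx, hp, hw₁, hw₂⟩, rfl, rfl⟩ := hq
    simp only [coe_product, Set.mem_prod, mem_coe, mem_powersetCard, card_supp]
    exact ⟨⟨supp_subset_supp_add_of_disjoint (disjoint_fst_of_mem_outside hx hp hw₁),
        (mem_parts.mp hp).2.1⟩,
      ⟨supp_subset_supp_add_of_disjoint (disjoint_fst_of_mem_outside hx (swap_mem_parts hp) hw₂),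
        (mem_parts.mp hp).2.2⟩⟩
  · rintro ⟨x, p, w₁, w₂⟩ hq ⟨x', p', w₁', w₂'⟩ hq' heq
    simp only [coe_filter, configs, mem_sigma, mem_product, endpoints, Prod.mk.injEq] at hq hq' heq
    obtain ⟨⟨-, hp, -⟩, ha₁, hb₁⟩ := hq
    obtain ⟨⟨-, hp', -⟩, ha₁', hb₁'⟩ := hq'
    have hpp : p = p' := Prod.ext (supp_injective heq.1) (supp_injective heq.2)
    subst hpp
    obtain rfl : x = x' := (mem_parts.mp hp).1.symm.trans (mem_parts.mp hp').1
    obtain rfl : w₁ = w₁' := by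
      rw [← add_add_cancel_left p.1 w₁, ← add_add_cancel_left p.1 w₁', ha₁, ha₁']
    obtain rfl : w₂ = w₂' := by
      rw [← add_add_cancel_left p.2 w₂, ← add_add_cancel_left p.2 w₂', hb₁, hb₁']
    rfl

theorem stmt_18_general (n t k : ℕ) (htk : t ≤ k)
    (y : (Fin n → ZMod 2) → ℝ) (hy : ∑ a ∈ sphere n k, (y a) ^ 2 = 1) :
    ∑ x ∈ sphere n (2 * t), ∑ p ∈ parts n t x,
        (∑ w ∈ outside n k t x, y (p.1 + w) * y (p.2 + w)) ^ 2 ≤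
      ((k.choose t : ℝ)) ^ 2 := by
  set g : (Fin n → ZMod 2) × (Fin n → ZMod 2) → ℝ := fun ab => y ab.1 ^ 2 * y ab.2 ^ 2
  calc _ ≤ ∑ x ∈ sphere n (2 * t), ∑ p ∈ parts n t x, ∑ w₁ ∈ outside n k t x,
          ∑ w₂ ∈ outside n k t x, g (p.1 + w₁, p.2 + w₂) := by
        gcongr
        exact (sum_mul_sq_le_sq_mul_sq _ _ _).trans_eq (sum_mul_sum _ _ _ _)
    _ = ∑ q ∈ configs n k t, g (endpoints q) := by
        simp only [configs, sum_sigma, sum_product]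
        rfl
    _ ≤ (k.choose t ^ 2 : ℕ) * ∑ ab ∈ sphere n k ×ˢ sphere n k, g ab :=
        sum_comp_le_mul_sum (fun _ _ => by positivity) (fun _ => endpoints_mem htk)
          fun _ hab => card_filter_endpoints_le (mem_product.mp hab).1 (mem_product.mp hab).2
    _ = (k.choose t : ℝ) ^ 2 := by
        rw [sum_product]
        simp only [g, ← sum_mul_sum, hy]
        push_cast
        ring

theorem stmt_18 (n t k : ℕ) (ht : 1 ≤ t) (htk : t ≤ k)
    (y : (Fin n → ZMod 2) → ℝ) (hy : ∑ a ∈ sphere n k, (y a) ^ 2 = 1) :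
    ∑ x ∈ sphere n (2 * t), ∑ p ∈ parts n t x,
        (∑ w ∈ outside n k t x, y (p.1 + w) * y (p.2 + w)) ^ 2 ≤
      ((k.choose t : ℝ)) ^ 2 :=
  stmt_18_general n t k htk y hy
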